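/- Let λ, μ, A, B be real numbers, let ξ¹, ξ² ∈ ℝ³ be linearly independent, and set ξ^P = ξ¹ + ξ². For w ∈ ℝ³ define the scalar k(w) = (λ + 2B)·[|ξ¹|²·(ξ^P·ξ²)·(ξ^P·w) + (ξ¹·ξ²)·(ξ¹·w)·|ξ^P|²] + (3μ + A)·[(ξ^P·ξ²)·(ξ¹·ξ^P)·(ξ¹·w) + (ξ^P·w)·(ξ¹·ξ^P)·(ξ¹·ξ²)] (this is |ξ^P|² times the w-component of the P-mode principal symbol generated by the interaction of a P wave with covector ξ¹ and an in-plane polarized S wave with covector ξ², as computed in the paper). Let w ∈ ℝ³ be a unit vector in the plane spanned by ξ¹ and ξ² with w·ξ² = 0 and w·ξ¹ ≥ 0, and define the angles α = arccos((ξ¹·ξ²)/(|ξ¹||ξ²|)) and ψ = arccos((ξ^P·ξ²)/(|ξ^P||ξ²|)). Then k(w) = (λ + 2B + 3μ + A)·|ξ¹|²·|ξ²|·|ξ^P|²·cos(α − ψ)·sin(α + ψ). (The P-wave output of the P–SH interaction; it is generically nonvanishing exactly when λ + 2B + 3μ + A ≠ 0.) -/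

import Mathlib

open Real

/-- Euclidean dot product on ℝ³. -/
def dot (x y : Fin 3 → ℝ) : ℝ := ∑ i, x i * y i

/-- Euclidean norm on ℝ³. -/
noncomputable def nrm (x : Fin 3 → ℝ) : ℝ := Real.sqrt (dot x x)

/-- |ξ^P|² times the w-component of the P-mode principal symbol generated by the
interaction of a P wave with covector ξ¹ and an in-plane polarized S wave with
covector ξ². -/
def kPSP (lam mu A B : ℝ) (ξ1 ξ2 w : Fin 3 → ℝ) : ℝ :=
  (lam + 2 * B) * (dot ξ1 ξ1 * dot (ξ1 + ξ2) ξ2 * dot (ξ1 + ξ2) w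
      + dot ξ1 ξ2 * dot ξ1 w * dot (ξ1 + ξ2) (ξ1 + ξ2))
    + (3 * mu + A) * (dot (ξ1 + ξ2) ξ2 * dot ξ1 (ξ1 + ξ2) * dot ξ1 w
      + dot (ξ1 + ξ2) w * dot ξ1 (ξ1 + ξ2) * dot ξ1 ξ2)

/-! Let `α`, `ψ` be the angles that `ξ¹` and `ξ^P` make with `ξ²`. Since `ξ² / |ξ²|, w` is an
orthonormal basis of the plane and `w` lies on the side of `ξ¹` (hence also of `ξ^P`), we get
`sin α · |ξ¹| = w·ξ¹` and `sin ψ · |ξ^P| = w·ξ^P = w·ξ¹`. The addition formulas then give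
`cos (α - ψ) |ξ¹| |ξ^P| = ξ¹·ξ^P` and `sin (α + ψ) |ξ¹| |ξ^P| |ξ²| = (w·ξ¹)(ξ¹·ξ² + ξ^P·ξ²)`, and
both sides of the identity equal `(λ + 2B + 3μ + A)(w·ξ¹)(ξ¹·ξ^P)(ξ¹·ξ² + ξ^P·ξ²)`. -/

open InnerProductGeometry Submodule
open scoped RealInnerProductSpace

section InnerProductSpace

variable {V : Type*} [NormedAddCommGroup V] [InnerProductSpace ℝ V] {w x y z : V}

theorem mem_span_pair_exchange_of_inner_eq_zero (hw : w ≠ 0) (hwy : ⟪w, y⟫ = 0)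
    (h : w ∈ span ℝ {x, y}) : x ∈ span ℝ {w, y} := by
  refine mem_span_insert_exchange h fun hwy' => hw ?_
  obtain ⟨c, rfl⟩ := mem_span_singleton.1 hwy'
  rw [real_inner_smul_left, real_inner_self_eq_norm_sq, mul_eq_zero] at hwy
  rcases hwy with rfl | hy
  · exact zero_smul ℝ y
  · rw [pow_eq_zero_iff two_ne_zero, norm_eq_zero] at hy
    rw [hy, smul_zero]

variable (hw : ‖w‖ = 1) (hwy : ⟪w, y⟫ = 0)
include hw hwy

theorem inner_mul_norm_sq_eq_of_mem_span_pair (hx : x ∈ span ℝ {w, y})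
    (hz : z ∈ span ℝ {w, y}) :
    ⟪x, z⟫ * ‖y‖ ^ 2 = ⟪x, y⟫ * ⟪z, y⟫ + ⟪w, x⟫ * ⟪w, z⟫ * ‖y‖ ^ 2 := by
  obtain ⟨a, b, rfl⟩ := mem_span_pair.1 hx
  obtain ⟨c, d, rfl⟩ := mem_span_pair.1 hz
  simp only [inner_add_left, inner_add_right, real_inner_smul_left, real_inner_smul_right,
    real_inner_self_eq_norm_sq, hwy, real_inner_comm w y, hw]
  ring

theorem sin_angle_mul_norm_eq_inner (hy : y ≠ 0) (hx : x ∈ span ℝ {w, y})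
    (hwx : 0 ≤ ⟪w, x⟫) : sin (angle x y) * ‖x‖ = ⟪w, x⟫ := by
  have hgram := inner_mul_norm_sq_eq_of_mem_span_pair hw hwy hx hx
  have h := sin_angle_mul_norm_mul_norm x y
  rw [real_inner_self_eq_norm_sq] at hgram
  rw [real_inner_self_eq_norm_sq, real_inner_self_eq_norm_sq,
    show ‖x‖ ^ 2 * ‖y‖ ^ 2 - ⟪x, y⟫ * ⟪x, y⟫ = (⟪w, x⟫ * ‖y‖) ^ 2 by
      linear_combination hgram,
    sqrt_sq (by positivity), ← mul_assoc] at h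
  exact mul_right_cancel₀ (norm_ne_zero_iff.2 hy) h

theorem cos_angle_sub_angle_mul_norm_mul_norm (hy : y ≠ 0) (hx : x ∈ span ℝ {w, y})
    (hz : z ∈ span ℝ {w, y}) (hwx : 0 ≤ ⟪w, x⟫) (hwz : 0 ≤ ⟪w, z⟫) :
    cos (angle x y - angle z y) * (‖x‖ * ‖z‖) = ⟪x, z⟫ := by
  have hcx := cos_angle_mul_norm_mul_norm x y
  have hcz := cos_angle_mul_norm_mul_norm z y
  have hsx := sin_angle_mul_norm_eq_inner hw hwy hy hx hwx
  have hsz := sin_angle_mul_norm_eq_inner hw hwy hy hz hwz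
  have hgram := inner_mul_norm_sq_eq_of_mem_span_pair hw hwy hx hz
  refine mul_right_cancel₀ (pow_ne_zero 2 (norm_ne_zero_iff.2 hy)) ?_
  rw [cos_sub]
  linear_combination (cos (angle z y) * ‖z‖ * ‖y‖) * hcx + ⟪x, y⟫ * hcz
    + (sin (angle z y) * ‖z‖ * ‖y‖ ^ 2) * hsx + (⟪w, x⟫ * ‖y‖ ^ 2) * hsz - hgram

theorem sin_angle_add_angle_mul_norm_mul_norm_mul_norm (hy : y ≠ 0) (hx : x ∈ span ℝ {w, y})
    (hz : z ∈ span ℝ {w, y}) (hwx : 0 ≤ ⟪w, x⟫) (hwz : 0 ≤ ⟪w, z⟫) :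
    sin (angle x y + angle z y) * (‖x‖ * ‖z‖ * ‖y‖)
      = ⟪w, x⟫ * ⟪z, y⟫ + ⟪x, y⟫ * ⟪w, z⟫ := by
  have hcx := cos_angle_mul_norm_mul_norm x y
  have hcz := cos_angle_mul_norm_mul_norm z y
  have hsx := sin_angle_mul_norm_eq_inner hw hwy hy hx hwx
  have hsz := sin_angle_mul_norm_eq_inner hw hwy hy hz hwz
  rw [sin_add]
  linear_combination (cos (angle z y) * ‖z‖ * ‖y‖) * hsx + ⟪w, x⟫ * hcz
    + (sin (angle z y) * ‖z‖) * hcx + ⟪x, y⟫ * hsz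

end InnerProductSpace

theorem dot_eq_inner (x y : Fin 3 → ℝ) :
    dot x y = ⟪WithLp.toLp 2 x, WithLp.toLp 2 y⟫ := by
  simp [dot, PiLp.inner_apply, mul_comm]

theorem nrm_eq_norm (x : Fin 3 → ℝ) : nrm x = ‖WithLp.toLp 2 x‖ := by
  rw [nrm, dot_eq_inner, real_inner_self_eq_norm_sq, sqrt_sq (norm_nonneg _)]

theorem arccos_dot_div_eq_angle (x y : Fin 3 → ℝ) :
    arccos (dot x y / (nrm x * nrm y)) = angle (WithLp.toLp 2 x) (WithLp.toLp 2 y) := by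
  rw [dot_eq_inner, nrm_eq_norm, nrm_eq_norm]
  rfl

theorem ps_interaction_P_output_general (lam mu A B : ℝ) (ξ1 ξ2 : Fin 3 → ℝ)
    (w : Fin 3 → ℝ)
    (hwunit : dot w w = 1)
    (hwspan : w ∈ Submodule.span ℝ ({ξ1, ξ2} : Set (Fin 3 → ℝ)))
    (hw2 : dot w ξ2 = 0) (hw1 : 0 ≤ dot w ξ1) :
    kPSP lam mu A B ξ1 ξ2 w =
      (lam + 2 * B + 3 * mu + A) * dot ξ1 ξ1 * nrm ξ2
        * dot (ξ1 + ξ2) (ξ1 + ξ2)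
        * Real.cos (Real.arccos (dot ξ1 ξ2 / (nrm ξ1 * nrm ξ2))
            - Real.arccos (dot (ξ1 + ξ2) ξ2 / (nrm (ξ1 + ξ2) * nrm ξ2)))
        * Real.sin (Real.arccos (dot ξ1 ξ2 / (nrm ξ1 * nrm ξ2))
            + Real.arccos (dot (ξ1 + ξ2) ξ2 / (nrm (ξ1 + ξ2) * nrm ξ2))) := by
  rcases eq_or_ne ξ2 0 with rfl | hξ2
  · simp [kPSP, nrm, dot]
  have hWspan : WithLp.toLp 2 w ∈ span ℝ {WithLp.toLp 2 ξ1, WithLp.toLp 2 ξ2} := by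
    obtain ⟨a, b, hab⟩ := mem_span_pair.1 hwspan
    exact mem_span_pair.2 ⟨a, b, by rw [← hab]; rfl⟩
  simp only [kPSP, arccos_dot_div_eq_angle]
  simp only [nrm_eq_norm, dot_eq_inner, WithLp.toLp_add, real_inner_self_eq_norm_sq]
    at hwunit hw1 hw2 ⊢
  set X := WithLp.toLp 2 ξ1
  set Y := WithLp.toLp 2 ξ2
  set W := WithLp.toLp 2 w
  have hY : Y ≠ 0 := by simpa [Y] using hξ2
  have hW : ‖W‖ = 1 := (pow_eq_one_iff_of_nonneg (norm_nonneg W) two_ne_zero).1 hwunit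
  have hX : X ∈ span ℝ {W, Y} :=
    mem_span_pair_exchange_of_inner_eq_zero (norm_ne_zero_iff.1 (by simp [hW])) hw2 hWspan
  have hXY : X + Y ∈ span ℝ {W, Y} := add_mem hX (subset_span (by simp))
  have hWXY : 0 ≤ ⟪W, X + Y⟫ := by rwa [inner_add_right, hw2, add_zero]
  have hcos := cos_angle_sub_angle_mul_norm_mul_norm hW hw2 hY hX hXY hw1 hWXY
  have hsin := sin_angle_add_angle_mul_norm_mul_norm_mul_norm hW hw2 hY hX hXY hw1 hWXY
  simp only [inner_add_left, inner_add_right, real_inner_self_eq_norm_sq, real_inner_comm W, hw2,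
    add_zero] at hcos hsin ⊢
  linear_combination (-(lam + 2 * B + 3 * mu + A) * sin (angle X Y + angle (X + Y) Y)
      * (‖X‖ * ‖X + Y‖ * ‖Y‖)) * hcos
    - (lam + 2 * B + 3 * mu + A) * (‖X‖ ^ 2 + ⟪X, Y⟫) * hsin
    + (lam + 2 * B) * ⟪X, Y⟫ * ⟪W, X⟫ * norm_add_sq_real X Y

/-- The P-wave output of the P–SH interaction. -/
theorem ps_interaction_P_output (lam mu A B : ℝ) (ξ1 ξ2 : Fin 3 → ℝ)
    (hind : LinearIndependent ℝ ![ξ1, ξ2]) (w : Fin 3 → ℝ)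
    (hwunit : dot w w = 1)
    (hwspan : w ∈ Submodule.span ℝ ({ξ1, ξ2} : Set (Fin 3 → ℝ)))
    (hw2 : dot w ξ2 = 0) (hw1 : 0 ≤ dot w ξ1) :
    kPSP lam mu A B ξ1 ξ2 w =
      (lam + 2 * B + 3 * mu + A) * dot ξ1 ξ1 * nrm ξ2
        * dot (ξ1 + ξ2) (ξ1 + ξ2)
        * Real.cos (Real.arccos (dot ξ1 ξ2 / (nrm ξ1 * nrm ξ2))
            - Real.arccos (dot (ξ1 + ξ2) ξ2 / (nrm (ξ1 + ξ2) * nrm ξ2)))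
        * Real.sin (Real.arccos (dot ξ1 ξ2 / (nrm ξ1 * nrm ξ2))
            + Real.arccos (dot (ξ1 + ξ2) ξ2 / (nrm (ξ1 + ξ2) * nrm ξ2))) :=
  ps_interaction_P_output_general lam mu A B ξ1 ξ2 w hwunit hwspan hw2 hw1
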